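/- Let Ω = (a,b) be a bounded open interval, H ∈ W^{1,∞}(ℝ) with H(0)=0, u₀ ∈ BV(Ω), m₁, m₂ ∈ ℝ, and let u be an entropy solution of the Dirichlet problem (D_R) with data (u₀, m₁, m₂). Then for every t ∈ (0,T]: ‖u(·,t)‖_{L¹(Ω)} ≤ ‖u₀‖_{L¹(Ω)} + 2‖H‖_∞ t. -/

import Mathlib

/-!
Adding the entropy inequalities (E+) and (E−) at level `k = 0` gives Kato's inequality
`|u|_t + (sgn u · H(u))_x ≤ 0` in the interior, with initial datum `|u₀|`; since `H(0) = 0`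
the flux `sgn u · H(u)` is bounded by `‖H‖_∞`. Test it with `φ(x) θ(t)`, where `φ` is a
plateau equal to `1` away from the boundary with `∫ |φ'| ≤ 2`, and `θ` steps down from `1`
to `0` across `[t - δ, t]`. The time term becomes minus an average of `∫ |u| φ` over
`[t - δ, t]`, and the flux term is at most `2 ‖H‖_∞ t`. Letting `δ → 0` (by continuity of
`u` in `C([0,T]; L¹)`) and then letting the plateau fill `(a, b)` gives the bound.
-/

open MeasureTheory Filter Set
open scoped Topology ENNReal NNReal BigOperators

noncomputable section

/-- Integral of a function against a signed measure. -/
def sIntg {α : Type*} [MeasurableSpace α] (s : SignedMeasure α) (f : α → ℝ) : ℝ :=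
  (∫ x, f x ∂s.toJordanDecomposition.posPart) -
    ∫ x, f x ∂s.toJordanDecomposition.negPart

/-- `sgn₊`. -/
def sgnp (v : ℝ) : ℝ := if 0 < v then 1 else 0

/-- `sgn₋`. -/
def sgnm (v : ℝ) : ℝ := if v < 0 then -1 else 0

/-- `sgn = sgn₊ + sgn₋`. -/
def sgn' (v : ℝ) : ℝ := sgnp v + sgnm v

/-- positive part `[v]₊`. -/
def pp (v : ℝ) : ℝ := max v 0

/-- negative part `[v]₋`. -/
def np (v : ℝ) : ℝ := max (-v) 0

/-- `H ∈ W^{1,∞}(ℝ)`: bounded and Lipschitz. -/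
def W1inf (H : ℝ → ℝ) : Prop :=
  (∃ C : ℝ, ∀ v, |H v| ≤ C) ∧ ∃ L : ℝ≥0, LipschitzWith L H

/-- Test functions `ζ ∈ C¹([0,T]; C_c¹(Ω))` with `ζ(·,T) = 0`. -/
structure IsTestCL (Ω : Set ℝ) (T : ℝ) (ζ : ℝ → ℝ → ℝ) : Prop where
  smooth : ContDiff ℝ 1 (fun q : ℝ × ℝ => ζ q.1 q.2)
  supp : ∃ K : Set ℝ, IsCompact K ∧ K ⊆ Ω ∧
    ∀ t, Function.support (fun x => ζ x t) ⊆ K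
  final : ∀ x, ζ x T = 0

/-- Essential limit of `f` at `x0` along the set `S` (avoiding a fixed null set). -/
def essLimWithin (f : ℝ → ℝ) (S : Set ℝ) (x0 l : ℝ) : Prop :=
  ∃ E : Set ℝ, volume E = 0 ∧
    ∀ x : ℕ → ℝ, (∀ n, x n ∈ S \ E) → Tendsto x atTop (𝓝 x0) →
      Tendsto (fun n => f (x n)) atTop (𝓝 l)

/-- Nonnegative `C¹` test functions compactly supported in `(0,T)`. -/
def IsTestT (T : ℝ) (β : ℝ → ℝ) : Prop :=
  ContDiff ℝ 1 β ∧ HasCompactSupport β ∧ tsupport β ⊆ Ioo 0 T ∧ ∀ t, 0 ≤ β t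

/-- The boundary-trace integrand `ξ ↦ ∫₀ᵀ sg(u(ξ,t) − k)[H(u(ξ,t)) − H(k)] β(t) dt`. -/
def BTrace (T : ℝ) (H sg : ℝ → ℝ) (u : ℝ → ℝ → ℝ) (k : ℝ) (β : ℝ → ℝ) : ℝ → ℝ :=
  fun ξ => ∫ t in Ioo (0:ℝ) T, sg (u ξ t - k) * (H (u ξ t) - H k) * β t

/-- Interior entropy inequality (E+) on the space-time region `Q`. -/
def EntropyIneqP (Q : Set (ℝ × ℝ)) (H : ℝ → ℝ) (u : ℝ → ℝ → ℝ) : Prop :=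
  ∀ k : ℝ, ∀ ζ : ℝ × ℝ → ℝ, ContDiff ℝ 1 ζ → HasCompactSupport ζ →
    tsupport ζ ⊆ Q → (∀ q, 0 ≤ ζ q) →
    0 ≤ ∫ q in Q, (pp (u q.1 q.2 - k) * fderiv ℝ ζ q (0, 1)
        + sgnp (u q.1 q.2 - k) * (H (u q.1 q.2) - H k) * fderiv ℝ ζ q (1, 0))

/-- Interior entropy inequality (E−) on the space-time region `Q`. -/
def EntropyIneqM (Q : Set (ℝ × ℝ)) (H : ℝ → ℝ) (u : ℝ → ℝ → ℝ) : Prop :=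
  ∀ k : ℝ, ∀ ζ : ℝ × ℝ → ℝ, ContDiff ℝ 1 ζ → HasCompactSupport ζ →
    tsupport ζ ⊆ Q → (∀ q, 0 ≤ ζ q) →
    0 ≤ ∫ q in Q, (np (u q.1 q.2 - k) * fderiv ℝ ζ q (0, 1)
        + sgnm (u q.1 q.2 - k) * (H (u q.1 q.2) - H k) * fderiv ℝ ζ q (1, 0))

/-- `u ∈ C([0,T]; L¹(Ω))` (with `u = u(x,t)`). -/
def ContL1 (Ω : Set ℝ) (T : ℝ) (u : ℝ → ℝ → ℝ) : Prop :=
  (∀ t ∈ Icc (0:ℝ) T, IntegrableOn (fun x => u x t) Ω volume) ∧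
  ∀ t₀ ∈ Icc (0:ℝ) T,
    Tendsto (fun t => ∫ x in Ω, |u x t - u x t₀|) (𝓝[Icc (0:ℝ) T] t₀) (𝓝 0)

/-- `u ∈ C([0,T]; L¹_loc(Ω))` (with `u = u(x,t)`). -/
def ContL1loc (Ω : Set ℝ) (T : ℝ) (u : ℝ → ℝ → ℝ) : Prop :=
  ∀ K : Set ℝ, IsCompact K → K ⊆ Ω →
    (∀ t ∈ Icc (0:ℝ) T, IntegrableOn (fun x => u x t) K volume) ∧
    ∀ t₀ ∈ Icc (0:ℝ) T,
      Tendsto (fun t => ∫ x in K, |u x t - u x t₀|) (𝓝[Icc (0:ℝ) T] t₀) (𝓝 0)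

/-- Initial condition (I+): `∫_I [u(·,t) − u₀]₊ → 0` as `t → 0⁺`, on every interval `I ⊆ Ω`. -/
def InitP (Ω : Set ℝ) (u0 : ℝ → ℝ) (u : ℝ → ℝ → ℝ) : Prop :=
  ∀ c d : ℝ, Ioo c d ⊆ Ω →
    Tendsto (fun t => ∫ x in Ioo c d, pp (u x t - u0 x)) (𝓝[>] (0:ℝ)) (𝓝 0)

/-- Initial condition (I−): `∫_I [u(·,t) − u₀]₋ → 0` as `t → 0⁺`, on every interval `I ⊆ Ω`. -/
def InitM (Ω : Set ℝ) (u0 : ℝ → ℝ) (u : ℝ → ℝ → ℝ) : Prop :=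
  ∀ c d : ℝ, Ioo c d ⊆ Ω →
    Tendsto (fun t => ∫ x in Ioo c d, np (u x t - u0 x)) (𝓝[>] (0:ℝ)) (𝓝 0)

/-- `f ∈ BV` on a one-dimensional region: the distributional derivative is a
finite signed measure. -/
def BVOn1 (s : Set ℝ) (f : ℝ → ℝ) : Prop :=
  IntegrableOn f s volume ∧
  ∃ μ : SignedMeasure ℝ,
    ∀ φ : ℝ → ℝ, ContDiff ℝ 1 φ → HasCompactSupport φ → tsupport φ ⊆ s →
      (∫ x in s, f x * deriv φ x) = - sIntg μ φ

/-- `u ∈ BV(Q)` for a space-time region `Q`: the distributional gradient is a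
finite (ℝ²-valued) signed measure. -/
def BVOn2 (Q : Set (ℝ × ℝ)) (u : ℝ → ℝ → ℝ) : Prop :=
  IntegrableOn (fun q : ℝ × ℝ => u q.1 q.2) Q volume ∧
  ∃ μx μt : SignedMeasure (ℝ × ℝ),
    ∀ φ : ℝ × ℝ → ℝ, ContDiff ℝ 1 φ → HasCompactSupport φ → tsupport φ ⊆ Q →
      (∫ q in Q, u q.1 q.2 * fderiv ℝ φ q (1, 0)) = - sIntg μx φ ∧
      (∫ q in Q, u q.1 q.2 * fderiv ℝ φ q (0, 1)) = - sIntg μt φ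

/-- `u ∈ BV_loc(Q)`. -/
def BVloc2 (Q : Set (ℝ × ℝ)) (u : ℝ → ℝ → ℝ) : Prop :=
  ∀ U : Set (ℝ × ℝ), IsOpen U → IsCompact (closure U) → closure U ⊆ Q → BVOn2 U u

/-- Entropy subsolution of the Dirichlet problem `(D_R)` on `(a,b) × (0,T)`
with initial datum `u0` and finite boundary data `m₁` (at `a`) and `m₂` (at `b`). -/
structure SubSolDR (a b T : ℝ) (H : ℝ → ℝ) (u0 : ℝ → ℝ) (m₁ m₂ : ℝ)
    (w : ℝ → ℝ → ℝ) : Prop where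
  bv : BVOn2 (Ioo a b ×ˢ Ioo 0 T) w
  entropy : ∀ k : ℝ, ∀ ζ : ℝ → ℝ → ℝ, IsTestCL (Ioo a b) T ζ →
    (∀ x t, 0 ≤ ζ x t) →
    -(∫ x in Ioo a b, pp (u0 x - k) * ζ x 0) ≤
      ∫ t in Ioo (0:ℝ) T, ∫ x in Ioo a b,
        (pp (w x t - k) * deriv (ζ x) t
          + sgnp (w x t - k) * (H (w x t) - H k) * deriv (fun y => ζ y t) x)
  bdryA : ∀ k : ℝ, m₁ < k → ∀ β : ℝ → ℝ, IsTestT T β →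
    ∃ l ≤ (0:ℝ), essLimWithin (BTrace T H sgnp w k β) (Ioi a) a l
  bdryB : ∀ k : ℝ, m₂ < k → ∀ β : ℝ → ℝ, IsTestT T β →
    ∃ l : ℝ, essLimWithin (BTrace T H sgnp w k β) (Iio b) b l ∧ 0 ≤ l

/-- Entropy supersolution of the Dirichlet problem `(D_R)` on `(a,b) × (0,T)`
with initial datum `v0` and finite boundary data `n₁` (at `a`) and `n₂` (at `b`). -/
structure SuperSolDR (a b T : ℝ) (H : ℝ → ℝ) (v0 : ℝ → ℝ) (n₁ n₂ : ℝ)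
    (w : ℝ → ℝ → ℝ) : Prop where
  bv : BVOn2 (Ioo a b ×ˢ Ioo 0 T) w
  entropy : ∀ k : ℝ, ∀ ζ : ℝ → ℝ → ℝ, IsTestCL (Ioo a b) T ζ →
    (∀ x t, 0 ≤ ζ x t) →
    -(∫ x in Ioo a b, np (v0 x - k) * ζ x 0) ≤
      ∫ t in Ioo (0:ℝ) T, ∫ x in Ioo a b,
        (np (w x t - k) * deriv (ζ x) t
          + sgnm (w x t - k) * (H (w x t) - H k) * deriv (fun y => ζ y t) x)
  bdryA : ∀ k : ℝ, k < n₁ → ∀ β : ℝ → ℝ, IsTestT T β →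
    ∃ l ≤ (0:ℝ), essLimWithin (BTrace T H sgnm w k β) (Ioi a) a l
  bdryB : ∀ k : ℝ, k < n₂ → ∀ β : ℝ → ℝ, IsTestT T β →
    ∃ l : ℝ, essLimWithin (BTrace T H sgnm w k β) (Iio b) b l ∧ 0 ≤ l


theorem pp_add_np (v : ℝ) : pp v + np v = |v| := by
  rcases le_total 0 v with h | h
  · simp [pp, np, h, abs_of_nonneg h]
  · simp [pp, np, h, abs_of_nonpos h]

theorem abs_pp_le (v : ℝ) : |pp v| ≤ |v| := by
  rw [pp, abs_of_nonneg (le_max_right _ _)]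
  exact max_le (le_abs_self v) (abs_nonneg v)

theorem abs_np_le (v : ℝ) : |np v| ≤ |v| := by
  rw [np, abs_of_nonneg (le_max_right _ _)]
  exact max_le (neg_le_abs v) (abs_nonneg v)

theorem abs_sgnp_le (v : ℝ) : |sgnp v| ≤ 1 := by
  unfold sgnp; split_ifs <;> norm_num

theorem abs_sgnm_le (v : ℝ) : |sgnm v| ≤ 1 := by
  unfold sgnm; split_ifs <;> norm_num

theorem abs_sgn'_le (v : ℝ) : |sgn' v| ≤ 1 := by
  unfold sgn' sgnp sgnm; split_ifs <;> norm_num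

theorem continuous_pp : Continuous pp := continuous_id.max continuous_const

theorem continuous_np : Continuous np := continuous_neg.max continuous_const

theorem measurable_sgnp : Measurable sgnp :=
  Measurable.ite measurableSet_Ioi measurable_const measurable_const

theorem measurable_sgnm : Measurable sgnm :=
  Measurable.ite measurableSet_Iio measurable_const measurable_const

theorem Continuous.exists_ae_restrict_norm_le {X : Type*} [TopologicalSpace X] [MeasurableSpace X]
    {g : X → ℝ} (hg : Continuous g) {K s : Set X} (hK : IsCompact K) (hs : MeasurableSet s)
    (hsK : s ⊆ K) (μ : Measure X) : ∃ M, ∀ᵐ z ∂μ.restrict s, ‖g z‖ ≤ M := by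
  obtain ⟨M, hM⟩ := hK.exists_bound_of_continuousOn hg.continuousOn
  exact ⟨M, (ae_restrict_iff' hs).2 (Eventually.of_forall fun z hz => hM z (hsK hz))⟩

theorem MeasureTheory.Integrable.comp_mul_bdd {α : Type*} [MeasurableSpace α] {μ : Measure α}
    [IsFiniteMeasure μ] {w ψ : α → ℝ} (hw : Integrable w μ) {F : ℝ → ℝ} (hF : Measurable F)
    {A B : ℝ} (hFb : ∀ v, |F v| ≤ A * |v| + B) (hψ : AEStronglyMeasurable ψ μ) {M : ℝ}
    (hψM : ∀ᵐ z ∂μ, ‖ψ z‖ ≤ M) : Integrable (fun z => F (w z) * ψ z) μ :=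
  (((hw.norm.const_mul A).add (integrable_const B)).mono'
    (hF.comp_aemeasurable hw.aemeasurable).aestronglyMeasurable
    (Eventually.of_forall fun z => hFb (w z))).mul_bdd hψ hψM

theorem MeasureTheory.IntegrableOn.comp_mul_continuous {a b : ℝ} {f ψ : ℝ → ℝ}
    (hf : IntegrableOn f (Ioo a b)) {F : ℝ → ℝ} (hF : Measurable F) {A B : ℝ}
    (hFb : ∀ v, |F v| ≤ A * |v| + B) (hψ : Continuous ψ) :
    IntegrableOn (fun x => F (f x) * ψ x) (Ioo a b) := by
  obtain ⟨M, hM⟩ := hψ.exists_ae_restrict_norm_le isCompact_Icc measurableSet_Ioo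
    Ioo_subset_Icc_self volume
  exact hf.comp_mul_bdd hF hFb hψ.aestronglyMeasurable hM

theorem MeasureTheory.Integrable.comp_mul_continuous_prod_Ioo {a b c d : ℝ} {w ψ : ℝ × ℝ → ℝ}
    (hw : Integrable w ((volume.restrict (Ioo a b)).prod (volume.restrict (Ioo c d))))
    {F : ℝ → ℝ} (hF : Measurable F) {A B : ℝ} (hFb : ∀ v, |F v| ≤ A * |v| + B)
    (hψ : Continuous ψ) :
    Integrable (fun z => F (w z) * ψ z)
      ((volume.restrict (Ioo a b)).prod (volume.restrict (Ioo c d))) := by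
  have hM := hψ.exists_ae_restrict_norm_le (K := Icc a b ×ˢ Icc c d) (s := Ioo a b ×ˢ Ioo c d)
    (isCompact_Icc.prod isCompact_Icc)
    (measurableSet_Ioo.prod measurableSet_Ioo) (prod_mono Ioo_subset_Icc_self Ioo_subset_Icc_self)
    (volume.prod volume)
  rw [← Measure.prod_restrict] at hM
  obtain ⟨M, hM⟩ := hM
  exact hw.comp_mul_bdd hF hFb hψ.aestronglyMeasurable hM

theorem le_integral_mul_of_integral_eq_one {α : Type*} [MeasurableSpace α] {μ : Measure α}
    {ρ f : α → ℝ} {c : ℝ} (hρ : Integrable ρ μ) (hρf : Integrable (fun t => ρ t * f t) μ)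
    (hρ0 : ∀ t, 0 ≤ ρ t) (hρ1 : ∫ t, ρ t ∂μ = 1) (hf : ∀ t, ρ t ≠ 0 → c ≤ f t) :
    c ≤ ∫ t, ρ t * f t ∂μ := by
  calc c = ∫ t, ρ t * c ∂μ := by rw [integral_mul_const, hρ1, one_mul]
    _ ≤ ∫ t, ρ t * f t ∂μ := integral_mono (hρ.mul_const c) hρf fun t => by
        rcases eq_or_ne (ρ t) 0 with h | h
        · simp [h]
        · exact mul_le_mul_of_nonneg_left (hf t h) (hρ0 t)

theorem setIntegral_Ioo_le_of_forall_pos {a b B : ℝ} {f : ℝ → ℝ} (hf : IntegrableOn f (Ioo a b))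
    (h : ∀ ε > 0, ∫ x in Ioo (a + ε) (b - ε), f x ≤ B) : ∫ x in Ioo a b, f x ≤ B := by
  set s : ℕ → Set ℝ := fun n => Ioo (a + 1 / (n + 1)) (b - 1 / (n + 1))
  have hmono : Monotone s := fun m n hmn => by
    have : 1 / ((n : ℝ) + 1) ≤ 1 / (m + 1) := Nat.one_div_le_one_div hmn
    exact Ioo_subset_Ioo (by linarith) (by linarith)
  have hunion : ⋃ n, s n = Ioo a b := by
    refine subset_antisymm (iUnion_subset fun n x hx => ?_) fun x hx => ?_
    · have : (0 : ℝ) < 1 / (n + 1) := Nat.one_div_pos_of_nat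
      exact ⟨by linarith [hx.1], by linarith [hx.2]⟩
    · obtain ⟨n, hn⟩ := exists_nat_one_div_lt (lt_min (sub_pos.2 hx.1) (sub_pos.2 hx.2))
      have := lt_min_iff.1 hn
      exact mem_iUnion.2 ⟨n, by linarith, by linarith⟩
  have hlim := tendsto_setIntegral_of_monotone (fun n => measurableSet_Ioo) hmono
    (hunion ▸ hf)
  rw [hunion] at hlim
  exact le_of_tendsto' hlim fun n => h _ Nat.one_div_pos_of_nat

theorem integral_prod_flux_le {α β : Type*} [MeasurableSpace α] [MeasurableSpace β]
    {ν : Measure α} {μ : Measure β} [SFinite ν] [SFinite μ] {H : ℝ → ℝ} {C : ℝ}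
    (hC : ∀ v, |H v| ≤ C) {w : α × β → ℝ} {θ : α → ℝ} {ψ : β → ℝ} (hθ0 : ∀ t, 0 ≤ θ t)
    (hθ : Integrable θ ν) (hψ : Integrable ψ μ)
    (hint : Integrable (fun z => sgn' (w z) * H (w z) * (ψ z.2 * θ z.1)) (ν.prod μ)) :
    ∫ z, sgn' (w z) * H (w z) * (ψ z.2 * θ z.1) ∂(ν.prod μ) ≤
      C * ((∫ t, θ t ∂ν) * ∫ x, |ψ x| ∂μ) := by
  have hpt : ∀ z : α × β, sgn' (w z) * H (w z) * (ψ z.2 * θ z.1) ≤ θ z.1 * (C * |ψ z.2|) :=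
    fun z => calc
      _ ≤ |sgn' (w z) * H (w z) * (ψ z.2 * θ z.1)| := le_abs_self _
      _ = |sgn' (w z) * H (w z)| * (|ψ z.2| * θ z.1) := by
          rw [abs_mul (sgn' (w z) * H (w z)), abs_mul (ψ z.2), abs_of_nonneg (hθ0 z.1)]
      _ ≤ C * (|ψ z.2| * θ z.1) := by
          refine mul_le_mul_of_nonneg_right ?_ (mul_nonneg (abs_nonneg _) (hθ0 _))
          rw [abs_mul]
          exact (mul_le_of_le_one_left (abs_nonneg _) (abs_sgn'_le _)).trans (hC _)
      _ = θ z.1 * (C * |ψ z.2|) := by ring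
  calc _ ≤ ∫ z, θ z.1 * (C * |ψ z.2|) ∂(ν.prod μ) :=
        integral_mono hint (hθ.mul_prod (hψ.abs.const_mul C)) hpt
    _ = C * ((∫ t, θ t ∂ν) * ∫ x, |ψ x| ∂μ) := by
        rw [integral_prod_mul (μ := ν) (ν := μ) θ fun x => C * |ψ x|, integral_const_mul]
        ring

section Integrability

variable {a b c d : ℝ} {w : ℝ × ℝ → ℝ} {f g : ℝ → ℝ}

theorem integrable_entropy_mul_prod_Ioo
    (hw : Integrable w ((volume.restrict (Ioo a b)).prod (volume.restrict (Ioo c d))))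
    {η : ℝ → ℝ} (hη : Measurable η) (hηb : ∀ v, |η v| ≤ |v|) (hf : Continuous f)
    (hg : Continuous g) :
    Integrable (fun z => η (w z) * (f z.2 * g z.1))
      ((volume.restrict (Ioo a b)).prod (volume.restrict (Ioo c d))) :=
  hw.comp_mul_continuous_prod_Ioo hη (A := 1) (B := 0) (fun v => by simpa using hηb v)
    ((hf.comp continuous_snd).mul (hg.comp continuous_fst))

theorem integrable_flux_mul_prod_Ioo
    (hw : Integrable w ((volume.restrict (Ioo a b)).prod (volume.restrict (Ioo c d))))
    {H sg : ℝ → ℝ} {C : ℝ} (hH : Continuous H) (hC : ∀ v, |H v| ≤ C) (hsg : Measurable sg)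
    (hsgb : ∀ v, |sg v| ≤ 1) (hf : Continuous f) (hg : Continuous g) :
    Integrable (fun z => sg (w z) * H (w z) * (f z.2 * g z.1))
      ((volume.restrict (Ioo a b)).prod (volume.restrict (Ioo c d))) :=
  hw.comp_mul_continuous_prod_Ioo (F := fun v => sg v * H v) (hsg.mul hH.measurable) (A := 0)
    (fun v => by
      rw [abs_mul, zero_mul, zero_add]
      exact (mul_le_of_le_one_left (abs_nonneg _) (hsgb v)).trans (hC v))
    ((hf.comp continuous_snd).mul (hg.comp continuous_fst))

end Integrability

theorem integral_abs_mul_eq_add {a b : ℝ} {f ψ : ℝ → ℝ} (hf : IntegrableOn f (Ioo a b))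
    (hψ : Continuous ψ) :
    ∫ x in Ioo a b, |f x| * ψ x =
      (∫ x in Ioo a b, pp (f x) * ψ x) + ∫ x in Ioo a b, np (f x) * ψ x := by
  rw [← integral_add (hf.comp_mul_continuous continuous_pp.measurable (A := 1) (B := 0)
      (fun v => by simpa using abs_pp_le v) hψ)
    (hf.comp_mul_continuous continuous_np.measurable (A := 1) (B := 0)
      (fun v => by simpa using abs_np_le v) hψ)]
  simp only [← add_mul, pp_add_np]

def smoothStep (p q : ℝ) (x : ℝ) : ℝ := Real.smoothTransition ((x - p) / (q - p))

namespace smoothStep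

variable {p q : ℝ}

theorem contDiff {n : ℕ∞} : ContDiff ℝ n (smoothStep p q) :=
  Real.smoothTransition.contDiff.comp ((contDiff_id.sub contDiff_const).div_const _)

theorem nonneg (x : ℝ) : 0 ≤ smoothStep p q x := Real.smoothTransition.nonneg _

theorem le_one (x : ℝ) : smoothStep p q x ≤ 1 := Real.smoothTransition.le_one _

theorem eq_zero_of_le_left (hpq : p ≤ q) {x : ℝ} (hx : x ≤ p) : smoothStep p q x = 0 :=
  Real.smoothTransition.zero_of_nonpos (div_nonpos_of_nonpos_of_nonneg (by linarith) (by linarith))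

theorem eq_one_of_right_le (hpq : p < q) {x : ℝ} (hx : q ≤ x) : smoothStep p q x = 1 :=
  Real.smoothTransition.one_of_one_le ((one_le_div (by linarith)).2 (by linarith))

theorem monotone (hpq : p ≤ q) : Monotone (smoothStep p q) := fun _ _ hxy =>
  Real.smoothTransition.monotone (div_le_div_of_nonneg_right (by linarith) (by linarith))

theorem differentiable : Differentiable ℝ (smoothStep p q) :=
  (contDiff (n := 1)).differentiable one_ne_zero

theorem continuous_deriv : Continuous (deriv (smoothStep p q)) :=
  (contDiff (n := 1)).continuous_deriv le_rfl

theorem deriv_nonneg (hpq : p ≤ q) (x : ℝ) : 0 ≤ deriv (smoothStep p q) x :=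
  (monotone hpq).deriv_nonneg

/-- Off `(p, q)` the step sits at its global minimum `0` or maximum `1`. -/

theorem deriv_eq_zero (hpq : p < q) {x : ℝ} (hx : x ∉ Ioo p q) : deriv (smoothStep p q) x = 0 := by
  rcases not_and_or.1 hx with hx | hx
  · refine IsLocalMin.deriv_eq_zero (Eventually.of_forall fun y => ?_)
    rw [eq_zero_of_le_left hpq.le (not_lt.1 hx)]
    exact nonneg y
  · refine IsLocalMax.deriv_eq_zero (Eventually.of_forall fun y => ?_)
    rw [eq_one_of_right_le hpq (not_lt.1 hx)]
    exact le_one y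

theorem hasCompactSupport_deriv (hpq : p < q) : HasCompactSupport (deriv (smoothStep p q)) :=
  HasCompactSupport.intro isCompact_Icc fun _ hx =>
    deriv_eq_zero hpq fun h => hx (Ioo_subset_Icc_self h)

theorem integrable_deriv (hpq : p < q) : Integrable (deriv (smoothStep p q)) :=
  continuous_deriv.integrable_of_hasCompactSupport (hasCompactSupport_deriv hpq)

theorem setIntegral_deriv (hpq : p < q) {s : Set ℝ} (hs : MeasurableSet s) (hps : Ioo p q ⊆ s) :
    ∫ x in s, deriv (smoothStep p q) x = 1 := by
  rw [setIntegral_eq_of_subset_of_forall_sdiff_eq_zero hs hps fun x hx => deriv_eq_zero hpq hx.2,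
    ← integral_Ioc_eq_integral_Ioo, ← intervalIntegral.integral_of_le hpq.le,
    intervalIntegral.integral_deriv_eq_sub (fun x _ => differentiable x)
      (continuous_deriv.intervalIntegrable _ _),
    eq_one_of_right_le hpq le_rfl, eq_zero_of_le_left hpq.le le_rfl, sub_zero]

theorem integral_deriv (hpq : p < q) : ∫ x, deriv (smoothStep p q) x = 1 := by
  rw [← setIntegral_univ]; exact setIntegral_deriv hpq MeasurableSet.univ (subset_univ _)

theorem setIntegral_one_sub_le (hpq : p < q) (hq : 0 ≤ q) {T : ℝ} (hqT : q ≤ T) :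
    ∫ τ in Ioo 0 T, (1 - smoothStep p q τ) ≤ q := by
  rw [setIntegral_eq_of_subset_of_forall_sdiff_eq_zero measurableSet_Ioo (Ioo_subset_Ioo_right hqT)
    fun τ hτ => by rw [eq_one_of_right_le hpq (not_lt.1 fun h => hτ.2 ⟨hτ.1.1, h⟩), sub_self]]
  refine (Real.le_norm_self _).trans ((norm_setIntegral_le_of_norm_le_const (C := 1)
    measure_Ioo_lt_top fun τ _ => ?_).trans_eq ?_)
  · rw [Real.norm_eq_abs, abs_of_nonneg (sub_nonneg.2 (le_one τ))]
    exact sub_le_self _ (nonneg τ)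
  · simp [measureReal_def, hq]

theorem le_setIntegral_deriv_mul {T c : ℝ} {J : ℝ → ℝ} (hpq : p < q) (hp : 0 ≤ p)
    (hqT : q ≤ T) (hJ : ContinuousOn J (Icc 0 T)) (hc : ∀ τ ∈ Ioo p q, c ≤ J τ) :
    c ≤ ∫ τ in Ioo 0 T, deriv (smoothStep p q) τ * J τ :=
  le_integral_mul_of_integral_eq_one (integrable_deriv hpq).integrableOn
    ((ContinuousOn.integrableOn_Icc (continuous_deriv.continuousOn.mul hJ)).mono_set
      Ioo_subset_Icc_self) (deriv_nonneg hpq.le)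
    (setIntegral_deriv hpq measurableSet_Ioo (Ioo_subset_Ioo hp hqT))
    fun τ hτ => hc τ (by_contra fun h => hτ (deriv_eq_zero hpq h))

end smoothStep

def plateau (a b ε : ℝ) (x : ℝ) : ℝ :=
  smoothStep (a + ε / 2) (a + ε) x * (1 - smoothStep (b - ε) (b - ε / 2) x)

namespace plateau

variable {a b ε : ℝ}

theorem contDiff : ContDiff ℝ 1 (plateau a b ε) :=
  smoothStep.contDiff.mul (contDiff_const.sub smoothStep.contDiff)

theorem nonneg (x : ℝ) : 0 ≤ plateau a b ε x :=
  mul_nonneg (smoothStep.nonneg x) (sub_nonneg.2 (smoothStep.le_one x))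

theorem le_one (x : ℝ) : plateau a b ε x ≤ 1 :=
  mul_le_one₀ (smoothStep.le_one x) (sub_nonneg.2 (smoothStep.le_one x))
    (sub_le_self _ (smoothStep.nonneg x))

theorem abs_le_one (x : ℝ) : |plateau a b ε x| ≤ 1 :=
  (abs_of_nonneg (nonneg x)).trans_le (le_one x)

theorem support_subset (hε : 0 < ε) :
    Function.support (plateau a b ε) ⊆ Icc (a + ε / 2) (b - ε / 2) := by
  intro x hx
  by_contra hxI
  rcases not_and_or.1 hxI with h | h
  · exact hx (by
      rw [plateau, smoothStep.eq_zero_of_le_left (by linarith) (not_le.1 h).le, zero_mul])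
  · exact hx (by
      rw [plateau, smoothStep.eq_one_of_right_le (by linarith) (not_le.1 h).le, sub_self, mul_zero])

theorem eq_one (hε : 0 < ε) {x : ℝ} (hx : x ∈ Icc (a + ε) (b - ε)) : plateau a b ε x = 1 := by
  rw [plateau, smoothStep.eq_one_of_right_le (by linarith) hx.1,
    smoothStep.eq_zero_of_le_left (by linarith) hx.2]
  ring

theorem abs_deriv_le (hε : 0 < ε) (x : ℝ) :
    |deriv (plateau a b ε) x| ≤
      deriv (smoothStep (a + ε / 2) (a + ε)) x + deriv (smoothStep (b - ε) (b - ε / 2)) x := by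
  have hd : deriv (plateau a b ε) x =
      deriv (smoothStep (a + ε / 2) (a + ε)) x * (1 - smoothStep (b - ε) (b - ε / 2) x) -
        smoothStep (a + ε / 2) (a + ε) x * deriv (smoothStep (b - ε) (b - ε / 2)) x := by
    have h₁ := (smoothStep.differentiable (p := a + ε / 2) (q := a + ε) x).hasDerivAt
    have h₂ := (smoothStep.differentiable (p := b - ε) (q := b - ε / 2) x).hasDerivAt
    exact (h₁.mul (h₂.const_sub 1)).deriv.trans (by ring)
  have h₁ := smoothStep.deriv_nonneg (p := a + ε / 2) (q := a + ε) (by linarith) x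
  have h₂ := smoothStep.deriv_nonneg (p := b - ε) (q := b - ε / 2) (by linarith) x
  have g₁ := smoothStep.nonneg (p := a + ε / 2) (q := a + ε) x
  have g₁' := smoothStep.le_one (p := a + ε / 2) (q := a + ε) x
  have g₂ := smoothStep.nonneg (p := b - ε) (q := b - ε / 2) x
  have g₂' := smoothStep.le_one (p := b - ε) (q := b - ε / 2) x
  rw [hd, abs_le]
  constructor <;> nlinarith

theorem setIntegral_abs_deriv_le (hε : 0 < ε) (s : Set ℝ) :
    ∫ x in s, |deriv (plateau a b ε) x| ≤ 2 := by
  have hi₁ := smoothStep.integrable_deriv (p := a + ε / 2) (q := a + ε) (by linarith)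
  have hi₂ := smoothStep.integrable_deriv (p := b - ε) (q := b - ε / 2) (by linarith)
  calc ∫ x in s, |deriv (plateau a b ε) x|
      ≤ ∫ x in s, (deriv (smoothStep (a + ε / 2) (a + ε)) x +
          deriv (smoothStep (b - ε) (b - ε / 2)) x) :=
        setIntegral_mono (((hi₁.add hi₂).mono'
          (contDiff.continuous_deriv le_rfl).abs.aestronglyMeasurable
          (Eventually.of_forall fun x => by
            rw [Real.norm_eq_abs, abs_abs]; exact abs_deriv_le hε x)).integrableOn)
          (hi₁.add hi₂).integrableOn (abs_deriv_le hε)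
    _ ≤ ∫ x, (deriv (smoothStep (a + ε / 2) (a + ε)) x +
          deriv (smoothStep (b - ε) (b - ε / 2)) x) :=
        setIntegral_le_integral (hi₁.add hi₂) (Eventually.of_forall fun x =>
          add_nonneg (smoothStep.deriv_nonneg (by linarith) x)
            (smoothStep.deriv_nonneg (by linarith) x))
    _ = 2 := by
      rw [integral_add hi₁ hi₂, smoothStep.integral_deriv (by linarith),
        smoothStep.integral_deriv (by linarith)]
      norm_num

end plateau

theorem BVOn2.integrable_swap {s t : Set ℝ} {u : ℝ → ℝ → ℝ} (h : BVOn2 (s ×ˢ t) u) :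
    Integrable (fun z : ℝ × ℝ => u z.2 z.1) ((volume.restrict t).prod (volume.restrict s)) := by
  have hu := h.1
  rw [IntegrableOn, Measure.volume_eq_prod, ← Measure.prod_restrict] at hu
  exact hu.swap

section ContL1

variable {s : Set ℝ} {T : ℝ} {u : ℝ → ℝ → ℝ} {φ : ℝ → ℝ}

theorem ContL1.integrableOn_abs_mul (hcont : ContL1 s T u)
    (hφ : AEStronglyMeasurable φ (volume.restrict s)) (hφ1 : ∀ x, |φ x| ≤ 1) {t : ℝ}
    (ht : t ∈ Icc 0 T) : IntegrableOn (fun x => |u x t| * φ x) s :=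
  (hcont.1 t ht).abs.mul_bdd hφ (Eventually.of_forall hφ1)

theorem ContL1.continuousOn_integral_abs_mul (hcont : ContL1 s T u)
    (hφ : AEStronglyMeasurable φ (volume.restrict s)) (hφ1 : ∀ x, |φ x| ≤ 1) :
    ContinuousOn (fun t => ∫ x in s, |u x t| * φ x) (Icc 0 T) := by
  intro t₀ ht₀
  rw [ContinuousWithinAt, tendsto_iff_dist_tendsto_zero]
  refine squeeze_zero' (Eventually.of_forall fun _ => dist_nonneg)
    (eventually_nhdsWithin_of_forall fun t ht => ?_) (hcont.2 t₀ ht₀)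
  rw [Real.dist_eq, ← integral_sub (hcont.integrableOn_abs_mul hφ hφ1 ht)
    (hcont.integrableOn_abs_mul hφ hφ1 ht₀), ← Real.norm_eq_abs]
  refine norm_integral_le_of_norm_le ((hcont.1 t ht).sub (hcont.1 t₀ ht₀)).abs
    (Eventually.of_forall fun x => ?_)
  rw [← sub_mul, Real.norm_eq_abs, abs_mul]
  exact mul_le_of_le_one_right (abs_nonneg _) (hφ1 x) |>.trans (abs_abs_sub_abs_le_abs_sub _ _)

end ContL1

/-- `SubSolDR.entropy` is the case `η = pp`, `sg = sgnp`, and `SuperSolDR.entropy` the case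
`η = np`, `sg = sgnm`. -/

def EntropyIneq (a b T : ℝ) (H η sg u0 : ℝ → ℝ) (w : ℝ → ℝ → ℝ) : Prop :=
  ∀ k : ℝ, ∀ ζ : ℝ → ℝ → ℝ, IsTestCL (Ioo a b) T ζ → (∀ x t, 0 ≤ ζ x t) →
    -(∫ x in Ioo a b, η (u0 x - k) * ζ x 0) ≤
      ∫ t in Ioo (0:ℝ) T, ∫ x in Ioo a b,
        (η (w x t - k) * deriv (ζ x) t
          + sg (w x t - k) * (H (w x t) - H k) * deriv (fun y => ζ y t) x)

section EntropyIneq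

variable {a b T : ℝ} {H η sg u0 : ℝ → ℝ} {u : ℝ → ℝ → ℝ} {φ θ : ℝ → ℝ}

theorem EntropyIneq.neg_integral_le_integral_prod (h : EntropyIneq a b T H η sg u0 u)
    (hH0 : H 0 = 0) (hφ : ContDiff ℝ 1 φ) (hθ : ContDiff ℝ 1 θ) (hφ0 : ∀ x, 0 ≤ φ x)
    (hθ0 : ∀ t, 0 ≤ θ t) {K : Set ℝ} (hK : IsCompact K) (hKab : K ⊆ Ioo a b)
    (hφK : Function.support φ ⊆ K) (hθT : θ T = 0)
    (hint : Integrable (fun z : ℝ × ℝ => η (u z.2 z.1) * (φ z.2 * deriv θ z.1)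
      + sg (u z.2 z.1) * H (u z.2 z.1) * (deriv φ z.2 * θ z.1))
      ((volume.restrict (Ioo 0 T)).prod (volume.restrict (Ioo a b)))) :
    -(∫ x in Ioo a b, η (u0 x) * (φ x * θ 0)) ≤
      ∫ z, (η (u z.2 z.1) * (φ z.2 * deriv θ z.1)
        + sg (u z.2 z.1) * H (u z.2 z.1) * (deriv φ z.2 * θ z.1))
        ∂(volume.restrict (Ioo 0 T)).prod (volume.restrict (Ioo a b)) := by
  have htest : IsTestCL (Ioo a b) T fun x t => φ x * θ t :=
    ⟨(hφ.comp contDiff_fst).mul (hθ.comp contDiff_snd),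
      ⟨K, hK, hKab, fun t => (Function.support_mul_subset_left _ _).trans hφK⟩,
      fun x => by rw [hθT, mul_zero]⟩
  have hE := h 0 _ htest fun x t => mul_nonneg (hφ0 x) (hθ0 t)
  have hderiv_t : ∀ x t, deriv (fun t => φ x * θ t) t = φ x * deriv θ t := fun x t =>
    deriv_const_mul _ (hθ.differentiable one_ne_zero t)
  have hderiv_x : ∀ x t, deriv (fun y => φ y * θ t) x = deriv φ x * θ t := fun x t =>
    deriv_mul_const (hφ.differentiable one_ne_zero x) _
  simp only [sub_zero, hH0, hderiv_t, hderiv_x] at hE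
  exact hE.trans_eq (integral_integral hint)

end EntropyIneq

section Solution

variable {a b T C m₁ m₂ : ℝ} {H u0 : ℝ → ℝ} {u : ℝ → ℝ → ℝ} {φ θ : ℝ → ℝ}

theorem kato_inequality_prod (hHc : Continuous H) (hH0 : H 0 = 0) (hC : ∀ v, |H v| ≤ C)
    (hu0 : IntegrableOn u0 (Ioo a b)) (hsub : SubSolDR a b T H u0 m₁ m₂ u)
    (hsup : SuperSolDR a b T H u0 m₁ m₂ u) (hφ : ContDiff ℝ 1 φ) (hθ : ContDiff ℝ 1 θ)
    (hφ0 : ∀ x, 0 ≤ φ x) (hθ0 : ∀ t, 0 ≤ θ t) {K : Set ℝ} (hK : IsCompact K)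
    (hKab : K ⊆ Ioo a b) (hφK : Function.support φ ⊆ K) (hθT : θ T = 0) :
    -((∫ x in Ioo a b, |u0 x| * φ x) * θ 0) ≤
      ∫ z, (|u z.2 z.1| * (φ z.2 * deriv θ z.1)
        + sgn' (u z.2 z.1) * H (u z.2 z.1) * (deriv φ z.2 * θ z.1))
        ∂(volume.restrict (Ioo 0 T)).prod (volume.restrict (Ioo a b)) := by
  have hu := hsub.bv.integrable_swap
  have hθ' := hθ.continuous_deriv le_rfl
  have hφ' := hφ.continuous_deriv le_rfl
  have hp := (integrable_entropy_mul_prod_Ioo hu continuous_pp.measurable abs_pp_le hφ.continuous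
    hθ').add (integrable_flux_mul_prod_Ioo hu hHc hC measurable_sgnp abs_sgnp_le hφ' hθ.continuous)
  have hm := (integrable_entropy_mul_prod_Ioo hu continuous_np.measurable abs_np_le hφ.continuous
    hθ').add (integrable_flux_mul_prod_Ioo hu hHc hC measurable_sgnm abs_sgnm_le hφ' hθ.continuous)
  calc -((∫ x in Ioo a b, |u0 x| * φ x) * θ 0)
      = -(∫ x in Ioo a b, pp (u0 x) * (φ x * θ 0)) +
          -(∫ x in Ioo a b, np (u0 x) * (φ x * θ 0)) := by
        rw [← integral_mul_const, ← neg_add, ← integral_abs_mul_eq_add hu0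
          (ψ := fun x => φ x * θ 0) (hφ.continuous.mul continuous_const)]
        simp only [mul_assoc]
    _ ≤ _ := add_le_add
        (EntropyIneq.neg_integral_le_integral_prod hsub.entropy hH0 hφ hθ hφ0 hθ0 hK hKab hφK
          hθT hp)
        (EntropyIneq.neg_integral_le_integral_prod hsup.entropy hH0 hφ hθ hφ0 hθ0 hK hKab hφK
          hθT hm)
    _ = _ := by
        refine (integral_add hp hm).symm.trans
          (integral_congr_ae (Eventually.of_forall fun z => ?_))
        simp only [Pi.add_apply, sgn', ← pp_add_np]
        ring

theorem abs_entropy_inequality (hHc : Continuous H) (hH0 : H 0 = 0) (hC : ∀ v, |H v| ≤ C)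
    (hu0 : IntegrableOn u0 (Ioo a b)) (hsub : SubSolDR a b T H u0 m₁ m₂ u)
    (hsup : SuperSolDR a b T H u0 m₁ m₂ u) (hφ : ContDiff ℝ 1 φ) (hθ : ContDiff ℝ 1 θ)
    (hφ0 : ∀ x, 0 ≤ φ x) (hθ0 : ∀ t, 0 ≤ θ t) {K : Set ℝ} (hK : IsCompact K)
    (hKab : K ⊆ Ioo a b) (hφK : Function.support φ ⊆ K) (hθT : θ T = 0) :
    -((∫ x in Ioo a b, |u0 x| * φ x) * θ 0) ≤
      (∫ t in Ioo 0 T, deriv θ t * ∫ x in Ioo a b, |u x t| * φ x) +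
        C * ((∫ t in Ioo 0 T, θ t) * ∫ x in Ioo a b, |deriv φ x|) := by
  have hu := hsub.bv.integrable_swap
  have hG := integrable_entropy_mul_prod_Ioo hu continuous_abs.measurable (fun v => (abs_abs v).le)
    hφ.continuous (hθ.continuous_deriv le_rfl)
  have hF := integrable_flux_mul_prod_Ioo hu hHc hC (measurable_sgnp.add measurable_sgnm)
    abs_sgn'_le (hφ.continuous_deriv le_rfl) hθ.continuous
  refine (kato_inequality_prod hHc hH0 hC hu0 hsub hsup hφ hθ hφ0 hθ0 hK hKab hφK hθT).trans_eq
    (integral_add hG hF) |>.trans (add_le_add (le_of_eq ?_) (integral_prod_flux_le hC hθ0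
      (hθ.continuous.integrableOn_Icc.mono_set Ioo_subset_Icc_self)
      ((hφ.continuous_deriv le_rfl).integrableOn_Icc.mono_set Ioo_subset_Icc_self) hF))
  rw [integral_prod _ hG]
  refine integral_congr_ae (Eventually.of_forall fun t => ?_)
  simp only [← integral_const_mul]
  congr 1 with x
  ring

theorem setIntegral_deriv_smoothStep_mul_le (hHc : Continuous H) (hH0 : H 0 = 0)
    (hC : ∀ v, |H v| ≤ C) (hu0 : IntegrableOn u0 (Ioo a b)) (hsub : SubSolDR a b T H u0 m₁ m₂ u)
    (hsup : SuperSolDR a b T H u0 m₁ m₂ u) {ε : ℝ} (hε : 0 < ε) {p q : ℝ} (hpq : p < q)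
    (hp : 0 ≤ p) (hqT : q ≤ T) :
    ∫ τ in Ioo 0 T, deriv (smoothStep p q) τ * ∫ x in Ioo a b, |u x τ| * plateau a b ε x ≤
      (∫ x in Ioo a b, |u0 x|) + 2 * C * q := by
  have key := abs_entropy_inequality hHc hH0 hC hu0 hsub hsup plateau.contDiff
    (contDiff_const.sub smoothStep.contDiff) plateau.nonneg
    (fun τ => sub_nonneg.2 (smoothStep.le_one τ)) (K := Icc (a + ε / 2) (b - ε / 2)) isCompact_Icc
    (Icc_subset_Ioo (by linarith) (by linarith)) (plateau.support_subset hε)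
    (by rw [smoothStep.eq_one_of_right_le hpq hqT, sub_self])
  simp only [deriv_const_sub, smoothStep.eq_zero_of_le_left hpq.le hp, sub_zero, mul_one, neg_mul,
    integral_neg] at key
  have hC0 : 0 ≤ C := (abs_nonneg _).trans (hC 0)
  have hu0φ : ∫ x in Ioo a b, |u0 x| * plateau a b ε x ≤ ∫ x in Ioo a b, |u0 x| :=
    integral_mono (hu0.abs.mul_bdd plateau.contDiff.continuous.aestronglyMeasurable
      (Eventually.of_forall plateau.abs_le_one)) hu0.abs fun x =>
        mul_le_of_le_one_right (abs_nonneg _) (plateau.le_one x)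
  have hflux : C * ((∫ τ in Ioo 0 T, (1 - smoothStep p q τ)) *
      ∫ x in Ioo a b, |deriv (plateau a b ε) x|) ≤ C * (q * 2) :=
    mul_le_mul_of_nonneg_left (mul_le_mul
      (smoothStep.setIntegral_one_sub_le hpq (hp.trans hpq.le) hqT)
      (plateau.setIntegral_abs_deriv_le hε _) (integral_nonneg fun _ => abs_nonneg _)
      (hp.trans hpq.le)) hC0
  linarith

theorem integral_abs_mul_plateau_le (hHc : Continuous H) (hH0 : H 0 = 0) (hC : ∀ v, |H v| ≤ C)
    (hu0 : IntegrableOn u0 (Ioo a b)) (hsub : SubSolDR a b T H u0 m₁ m₂ u)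
    (hsup : SuperSolDR a b T H u0 m₁ m₂ u) (hcont : ContL1 (Ioo a b) T u) {ε : ℝ} (hε : 0 < ε)
    {t : ℝ} (ht : t ∈ Ioc 0 T) :
    ∫ x in Ioo a b, |u x t| * plateau a b ε x ≤ (∫ x in Ioo a b, |u0 x|) + 2 * C * t := by
  set J := fun τ => ∫ x in Ioo a b, |u x τ| * plateau a b ε x
  have hJ : ContinuousOn J (Icc 0 T) := hcont.continuousOn_integral_abs_mul
    plateau.contDiff.continuous.aestronglyMeasurable plateau.abs_le_one
  refine le_of_forall_pos_le_add fun η hη => ?_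
  obtain ⟨δ, hδ, hJδ⟩ := Metric.continuousWithinAt_iff.1 (hJ t ⟨ht.1.le, ht.2⟩) η hη
  set δ' := min (δ / 2) t
  have hδ' : 0 < δ' := lt_min (half_pos hδ) ht.1
  have hδ't : δ' ≤ t := min_le_right _ _
  -- average `J` against the derivative of a step from `0` to `1` across `[t - δ', t]`
  have hclose : ∀ τ ∈ Ioo (t - δ') t, J t - η ≤ J τ := fun τ hτ => by
    have hdist : dist (J τ) (J t) < η := hJδ ⟨by linarith [hτ.1], by linarith [hτ.2, ht.2]⟩ (by
      rw [Real.dist_eq, abs_of_neg (sub_neg.2 hτ.2)]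
      linarith [hτ.1, min_le_left (δ / 2) t])
    rw [Real.dist_eq] at hdist
    linarith [neg_abs_le (J τ - J t)]
  linarith [smoothStep.le_setIntegral_deriv_mul (by linarith) (sub_nonneg.2 hδ't) ht.2 hJ hclose,
    setIntegral_deriv_smoothStep_mul_le hHc hH0 hC hu0 hsub hsup hε (p := t - δ') (by linarith)
      (sub_nonneg.2 hδ't) ht.2]

end Solution

theorem stmt14_general (a b T : ℝ)
    (H : ℝ → ℝ) (hW : W1inf H) (hH0 : H 0 = 0)
    (u0 : ℝ → ℝ) (hu0 : BVOn1 (Ioo a b) u0) (m₁ m₂ : ℝ)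
    (u : ℝ → ℝ → ℝ)
    (hsub : SubSolDR a b T H u0 m₁ m₂ u) (hsup : SuperSolDR a b T H u0 m₁ m₂ u)
    (hcont : ContL1 (Ioo a b) T u)
    (C : ℝ) (hC : ∀ v, |H v| ≤ C) :
    ∀ t ∈ Ioc (0:ℝ) T,
      (∫ x in Ioo a b, |u x t|) ≤ (∫ x in Ioo a b, |u0 x|) + 2 * C * t := by
  obtain ⟨-, L, hL⟩ := hW
  intro t ht
  have ht' : t ∈ Icc 0 T := ⟨ht.1.le, ht.2⟩
  refine setIntegral_Ioo_le_of_forall_pos (hcont.1 t ht').abs fun ε hε => ?_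
  calc ∫ x in Ioo (a + ε) (b - ε), |u x t|
      = ∫ x in Ioo (a + ε) (b - ε), |u x t| * plateau a b ε x :=
        setIntegral_congr_fun measurableSet_Ioo fun x hx => by
          rw [plateau.eq_one hε (Ioo_subset_Icc_self hx), mul_one]
    _ ≤ ∫ x in Ioo a b, |u x t| * plateau a b ε x :=
        setIntegral_mono_set
          (hcont.integrableOn_abs_mul plateau.contDiff.continuous.aestronglyMeasurable
            plateau.abs_le_one ht')
          (Eventually.of_forall fun x => mul_nonneg (abs_nonneg _) (plateau.nonneg x))
          (Ioo_subset_Ioo (by linarith) (by linarith)).eventuallyLE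
    _ ≤ _ := integral_abs_mul_plateau_le hL.continuous hH0 hC hu0.1 hsub hsup hcont hε ht

/-- Lemma 5.4: `L¹` bound for the entropy solution of `(D_R)`:
`‖u(·,t)‖_{L¹} ≤ ‖u₀‖_{L¹} + 2‖H‖_∞ t`. -/
theorem stmt14 (a b T : ℝ) (hab : a < b) (hT : 0 < T)
    (H : ℝ → ℝ) (hW : W1inf H) (hH0 : H 0 = 0)
    (u0 : ℝ → ℝ) (hu0 : BVOn1 (Ioo a b) u0) (m₁ m₂ : ℝ)
    (u : ℝ → ℝ → ℝ)
    (hsub : SubSolDR a b T H u0 m₁ m₂ u) (hsup : SuperSolDR a b T H u0 m₁ m₂ u)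
    (hcont : ContL1 (Ioo a b) T u)
    (C : ℝ) (hC : ∀ v, |H v| ≤ C) :
    ∀ t ∈ Ioc (0:ℝ) T,
      (∫ x in Ioo a b, |u x t|) ≤ (∫ x in Ioo a b, |u0 x|) + 2 * C * t :=
  stmt14_general a b T H hW hH0 u0 hu0 m₁ m₂ u hsub hsup hcont C hC
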